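/- arXiv:math/0703707 — 4 statements merged into one kernel-verified Lean document; each statement's English description precedes it below -/
import Mathlib

section
/- (Theorem 2) Let p be an odd prime, d ≥ 2 with d ∣ p−1, f = (p−1)/d. Define the d×d matrix M = (m_{ij})_{0 ≤ i,j ≤ d−1} over ℕ by m_{ij} = 0 if (i,j) = 0 and m_{ij} = 1 otherwise, and write (m_{ij}^{(n)}) = M^n. Then g_d(p) = max_{0 ≤ α ≤ d−1} min{ s ≥ 1 : m_{(α+θ)θ}^{(s−1)} ≠ 0 }, where the row index α+θ is taken mod d. -/
open Finset

/-- The Gauss period `η_i = Σ_{u=0}^{f-1} ζ^{ω^{du+i}}`. -/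
noncomputable def gaussPeriod (p d f : ℕ) (ω : (ZMod p)ˣ) (ζ : ℂ) (i : ℕ) : ℂ :=
  ∑ u ∈ Finset.range f, ζ ^ (((ω : ZMod p) ^ (d * u + i)).val)

/-- The cyclotomic number `(i,j)` of order `d`. -/
noncomputable def cycNum (p d f : ℕ) (ω : (ZMod p)ˣ) (i j : ℕ) : ℕ :=
  Nat.card {uv : ℕ × ℕ // uv.1 < f ∧ uv.2 < f ∧
    (1 : ZMod p) + (ω : ZMod p) ^ (d * uv.1 + i) = (ω : ZMod p) ^ (d * uv.2 + j)}

/-- The cyclotomic integer `n(k,ν) = Σ_{i=0}^{d-1} η_i^k · η_{i+ν}`. -/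
noncomputable def nInt (p d f : ℕ) (ω : (ZMod p)ˣ) (ζ : ℂ) (k ν : ℕ) : ℂ :=
  ∑ i ∈ Finset.range d, (gaussPeriod p d f ω ζ i) ^ k * gaussPeriod p d f ω ζ (i + ν)

/-- `θ = 0` if `f` is even, `θ = d/2` if `f` is odd. -/
def theta (d f : ℕ) : ℕ := if Even f then 0 else d / 2

/-- `N(k,a)`: the number of `k`-tuples of nonzero `d`-th powers summing to `a`. -/
noncomputable def waringCount (p d k : ℕ) (a : ZMod p) : ℕ :=
  Nat.card {t : Fin k → ZMod p //
    (∀ i, ∃ b : (ZMod p)ˣ, ((b : ZMod p)) ^ d = t i) ∧ ∑ i, t i = a}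

/-- `s_d(p,a)`: the least `k ≥ 1` such that `a` is a sum of `k` nonzero `d`-th powers. -/
noncomputable def sWaring (p d : ℕ) (a : ZMod p) : ℕ :=
  sInf {k | 1 ≤ k ∧ ∃ u : Fin k → (ZMod p)ˣ, a = ∑ i, ((u i : ZMod p)) ^ d}

/-- `g_d(p) = max_{a ∈ 𝔽_p^*} s_d(p,a)`. -/
noncomputable def gWaring (p d : ℕ) : ℕ :=
  sSup {s | ∃ a : (ZMod p)ˣ, s = sWaring p d (a : ZMod p)}

/-- Product of a chain of cyclotomic numbers `(a,x₁)(x₁,x₂)⋯(xₘ,b)`. -/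
noncomputable def chainProd (c : ℕ → ℕ → ℕ) (a b : ℕ) : List ℕ → ℕ
  | [] => c a b
  | x :: xs => c a x * chainProd c x b xs

/-- Sum over all chains of `m` intermediate indices `0 ≤ i < d` of the products
`(a,i₂)(i₂,i₃)⋯(i_{m+1},b)` of consecutive cyclotomic numbers. -/
noncomputable def chainSum (d : ℕ) (c : ℕ → ℕ → ℕ) (a b m : ℕ) : ℕ :=
  ∑ v : Fin m → Fin d, chainProd c a b (List.ofFn fun i => ((v i : ℕ)))

/-!
Let `C(x)` be the class of a unit `x` modulo nonzero `d`-th powers, and write `X → Y` when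
`1 + X` meets `Y`. The cyclotomic number `(i,j)` is nonzero exactly when `C(ω^i) → C(ω^j)`, so
`M` is the adjacency matrix of `→` and `(M^n)_{ij} ≠ 0` iff there is a walk of length `n` from
`C(ω^i)` to `C(ω^j)`. If `a = x + b` with `x` a nonzero `d`-th power, then `1 + (-a/x) = -b/x`;
hence the least number of nonzero `d`-th powers summing to `a` is one more than the length of a
shortest walk from `C(-a)` to `C(-1)`. Finally `-1 = ω^((p-1)/2)` and `(p-1)/2 ≡ θ (mod d)`, so
`C(-ω^α) = C(ω^(α+θ))`.
-/

def Relation.ReachIn {α : Type*} (r : α → α → Prop) : ℕ → α → α → Prop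
  | 0, a, b => a = b
  | n + 1, a, c => ∃ b, r a b ∧ Relation.ReachIn r n b c

theorem Relation.reachIn_map_iff {α β : Type*} {r : α → α → Prop} {s : β → β → Prop}
    {e : α → β} (he : Function.Bijective e) (hrs : ∀ a b, r a b ↔ s (e a) (e b)) :
    ∀ n a b, ReachIn r n a b ↔ ReachIn s n (e a) (e b)
  | 0, _, _ => he.1.eq_iff.symm
  | n + 1, a, c => by
    constructor
    · rintro ⟨b, hab, hbc⟩
      exact ⟨e b, (hrs a b).1 hab, (reachIn_map_iff he hrs n b c).1 hbc⟩
    · rintro ⟨y, hay, hyc⟩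
      obtain ⟨b, rfl⟩ := he.2 y
      exact ⟨b, (hrs a b).2 hay, (reachIn_map_iff he hrs n b c).2 hyc⟩

theorem Matrix.pow_apply_ne_zero_iff_reachIn {ι R : Type*} [Fintype ι] [DecidableEq ι]
    [Semiring R] [PartialOrder R] [CanonicallyOrderedAdd R] [NoZeroDivisors R] [Nontrivial R]
    (M : Matrix ι ι R) :
    ∀ n i j, (M ^ n) i j ≠ 0 ↔ Relation.ReachIn (fun i j => M i j ≠ 0) n i j
  | 0, i, j => by
    rw [pow_zero, Matrix.one_apply]
    split_ifs with h <;> simp [h, Relation.ReachIn]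
  | n + 1, i, j => by
    rw [pow_succ', Matrix.mul_apply, Ne, Finset.sum_eq_zero_iff]
    simp only [Finset.mem_univ, true_implies, not_forall, mul_ne_zero_iff,
      Matrix.pow_apply_ne_zero_iff_reachIn M n]
    rfl

theorem Nat.sInf_eq_sInf_of_subset_of_forall_exists_le {S T : Set ℕ} (hTS : T ⊆ S)
    (hST : ∀ k ∈ S, ∃ s ∈ T, s ≤ k) : sInf S = sInf T := by
  rcases S.eq_empty_or_nonempty with rfl | hS
  · rw [Set.subset_empty_iff.1 hTS]
  obtain ⟨s, hsT, hs⟩ := hST _ (Nat.sInf_mem hS)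
  exact le_antisymm (Nat.sInf_le (hTS (Nat.sInf_mem ⟨s, hsT⟩))) ((Nat.sInf_le hsT).trans hs)

abbrev PowerClasses (K : Type*) [Field K] (d : ℕ) := Kˣ ⧸ (powMonoidHom d : Kˣ →* Kˣ).range

section PowerClasses

variable {K : Type*} [Field K] {d : ℕ}

theorem PowerClasses.mk_eq_mk_iff {a b : Kˣ} :
    (a : PowerClasses K d) = b ↔ ∃ c : Kˣ, b = a * c ^ d := by
  rw [QuotientGroup.eq, MonoidHom.mem_range]
  simp only [powMonoidHom_apply, eq_inv_mul_iff_mul_eq, eq_comm]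

theorem PowerClasses.mk_mul_pow (a c : Kˣ) : ((a * c ^ d : Kˣ) : PowerClasses K d) = a :=
  (mk_eq_mk_iff.2 ⟨c, rfl⟩).symm

theorem PowerClasses.mk_pow_mod (ω : Kˣ) (n : ℕ) :
    ((ω ^ (n % d) : Kˣ) : PowerClasses K d) = ↑(ω ^ n) := by
  conv_rhs => rw [← Nat.mod_add_div n d, pow_add, pow_mul, pow_right_comm, mk_mul_pow]

variable (d) in
def AddOneMeets (X Y : PowerClasses K d) : Prop :=
  ∃ g h : Kˣ, (g : PowerClasses K d) = X ∧ (h : PowerClasses K d) = Y ∧ 1 + (g : K) = h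

theorem addOneMeets_neg_neg_iff (a b : Kˣ) :
    AddOneMeets d (↑(-a) : PowerClasses K d) ↑(-b) ↔
      ∃ x y : Kˣ, (a : K) = x ^ d + b * y ^ d := by
  constructor
  · rintro ⟨g, h, hg, hh, hgh⟩
    obtain ⟨c, rfl⟩ := PowerClasses.mk_eq_mk_iff.1 hg.symm
    obtain ⟨e, rfl⟩ := PowerClasses.mk_eq_mk_iff.1 hh.symm
    refine ⟨c⁻¹, e * c⁻¹, ?_⟩
    push_cast at hgh ⊢
    simp only [inv_pow, mul_pow]
    field_simp
    linear_combination -hgh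
  · rintro ⟨x, y, hxy⟩
    refine ⟨-a * x⁻¹ ^ d, -b * (y * x⁻¹) ^ d, PowerClasses.mk_mul_pow _ _,
      PowerClasses.mk_mul_pow _ _, ?_⟩
    push_cast
    simp only [inv_pow, mul_pow]
    rw [hxy]
    field_simp
    ring

theorem exists_sum_pow_of_reachIn :
    ∀ (n : ℕ) (a : Kˣ),
      Relation.ReachIn (AddOneMeets d) n (↑(-a) : PowerClasses K d) ↑(-1 : Kˣ) →
        ∃ u : Fin (n + 1) → Kˣ, (a : K) = ∑ i, (u i : K) ^ d
  | 0, a, h => by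
    obtain ⟨c, hc⟩ := PowerClasses.mk_eq_mk_iff.1 h.symm
    exact ⟨fun _ => c, by simpa [neg_eq_iff_eq_neg] using congrArg Units.val hc⟩
  | n + 1, a, ⟨Y, haY, hY⟩ => by
    obtain ⟨b, rfl⟩ := QuotientGroup.mk_surjective Y
    rw [← neg_neg b] at haY hY
    obtain ⟨x, y, hxy⟩ := (addOneMeets_neg_neg_iff a (-b)).1 haY
    obtain ⟨u, hu⟩ := exists_sum_pow_of_reachIn n (-b) hY
    refine ⟨Fin.cons x fun i => u i * y, ?_⟩
    rw [Fin.sum_univ_succ, hxy, hu, Finset.sum_mul]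
    simp [mul_pow]

theorem exists_reachIn_of_eq_sum_pow :
    ∀ (k : ℕ) (a : Kˣ) (u : Fin k → Kˣ), (a : K) = ∑ i, (u i : K) ^ d →
      ∃ n < k, Relation.ReachIn (AddOneMeets d) n (↑(-a) : PowerClasses K d) ↑(-1 : Kˣ)
  | 0, a, _, ha => by simp at ha
  | k + 1, a, u, ha => by
    rw [Fin.sum_univ_succ] at ha
    by_cases hb : ∑ i : Fin k, (u i.succ : K) ^ d = 0
    · refine ⟨0, k.succ_pos, ?_⟩
      have : -a = -1 * u 0 ^ d := Units.ext (by simp [ha, hb])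
      rw [this, PowerClasses.mk_mul_pow]
      rfl
    · obtain ⟨n, hnk, hn⟩ := exists_reachIn_of_eq_sum_pow k (Units.mk0 _ hb) _ rfl
      refine ⟨n + 1, by omega, _, ?_, hn⟩
      exact (addOneMeets_neg_neg_iff _ _).2 ⟨u 0, 1, by simpa using ha⟩

theorem sInf_sum_pow_eq_sInf_reachIn (a : Kˣ) :
    sInf {k | 1 ≤ k ∧ ∃ u : Fin k → Kˣ, (a : K) = ∑ i, (u i : K) ^ d} =
      sInf {s | 1 ≤ s ∧
        Relation.ReachIn (AddOneMeets d) (s - 1) (↑(-a) : PowerClasses K d) ↑(-1 : Kˣ)} := by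
  refine Nat.sInf_eq_sInf_of_subset_of_forall_exists_le ?_ ?_
  · rintro s ⟨hs, h⟩
    obtain ⟨n, rfl⟩ := Nat.exists_eq_add_of_le' hs
    exact ⟨hs, exists_sum_pow_of_reachIn n a h⟩
  · rintro k ⟨-, u, hu⟩
    obtain ⟨n, hnk, hn⟩ := exists_reachIn_of_eq_sum_pow k a u hu
    exact ⟨n + 1, ⟨n.succ_pos, hn⟩, hnk⟩

theorem Units.pow_eq_neg_one_of_orderOf_eq_two_mul {ω : Kˣ} {m : ℕ} (hm : m ≠ 0)
    (h : orderOf ω = 2 * m) : ω ^ m = -1 := by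
  have hsq : ((ω ^ m : Kˣ) : K) ^ 2 = 1 := by
    rw [← Units.val_pow_eq_pow_val, ← pow_mul, mul_comm, ← h, pow_orderOf_eq_one,
      Units.val_one]
  have hne : ω ^ m ≠ 1 := pow_ne_one_of_lt_orderOf hm (by omega)
  rcases sq_eq_one_iff.1 hsq with h1 | h1
  · exact absurd (Units.ext h1) hne
  · exact Units.ext h1

theorem PowerClasses.mk_neg_one {ω : Kˣ} {f : ℕ} (hord : orderOf ω = d * f) (hdf : d * f ≠ 0)
    (heven : Even (d * f)) : ((-1 : Kˣ) : PowerClasses K d) = ↑(ω ^ theta d f) := by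
  suffices ∃ k, -1 = ω ^ theta d f * (ω ^ k) ^ d by
    obtain ⟨k, hk⟩ := this
    rw [hk, mk_mul_pow]
  unfold theta
  split_ifs with hf
  · obtain ⟨k, rfl⟩ := hf
    refine ⟨k, ?_⟩
    rw [← Units.pow_eq_neg_one_of_orderOf_eq_two_mul (m := d * k)
      (by rw [mul_add] at hdf; omega) (by rw [hord]; ring), pow_zero, one_mul, ← pow_mul,
      mul_comm]
  · obtain ⟨e, rfl⟩ := (Nat.even_mul.1 heven).resolve_right hf
    obtain ⟨k, rfl⟩ := Nat.not_even_iff_odd.1 hf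
    refine ⟨k, ?_⟩
    rw [← Units.pow_eq_neg_one_of_orderOf_eq_two_mul (m := e * (2 * k + 1))
      (by rw [← two_mul, mul_assoc] at hdf; omega) (by rw [hord]; ring), ← pow_mul, ← pow_add,
      show (e + e) / 2 = e by omega]
    ring_nf

theorem PowerClasses.mk_eq_mk_pow_iff {ω : Kˣ} (hω : ∀ x : Kˣ, ∃ n : ℕ, ω ^ n = x)
    {f : ℕ} (hord : orderOf ω = d * f) (hf : 0 < f) (g : Kˣ) (i : ℕ) :
    (g : PowerClasses K d) = ↑(ω ^ i) ↔ ∃ u < f, g = ω ^ (d * u + i) := by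
  constructor
  · intro h
    obtain ⟨c, rfl⟩ := mk_eq_mk_iff.1 h.symm
    obtain ⟨m, rfl⟩ := hω c
    refine ⟨m % f, Nat.mod_lt m hf, ?_⟩
    have hm : m * d = d * (m % f) + d * f * (m / f) := by
      rw [mul_assoc, ← mul_add, Nat.mod_add_div, mul_comm]
    rw [← pow_mul, ← pow_add, pow_eq_pow_iff_modEq, hord, hm, Nat.ModEq, ← add_assoc,
      Nat.add_mul_mod_self_left, add_comm]
  · rintro ⟨u, -, rfl⟩
    rw [pow_add, mul_comm, pow_mul, pow_right_comm, mk_mul_pow]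

theorem PowerClasses.bijective_mk_pow [NeZero d] {ω : Kˣ}
    (hω : ∀ x : Kˣ, ∃ n : ℕ, ω ^ n = x) {f : ℕ} (hord : orderOf ω = d * f)
    (hf : 0 < f) :
    Function.Bijective fun i : Fin d => ((ω ^ (i : ℕ) : Kˣ) : PowerClasses K d) := by
  refine ⟨fun i j hij => ?_, fun X => ?_⟩
  · obtain ⟨u, hu, hiu⟩ := (mk_eq_mk_pow_iff hω hord hf _ _).1 hij
    have hdf : d ≤ d * f := Nat.le_mul_of_pos_right d hf
    have hlt : d * u + j < d * f := by nlinarith [i.isLt, j.isLt]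
    have hij : (i : ℕ) = d * u + j := pow_injOn_Iio_orderOf (x := ω)
      (by rw [Set.mem_Iio]; omega) (by rw [Set.mem_Iio]; omega) hiu
    obtain rfl : u = 0 := by
      by_contra hu0
      have := Nat.le_mul_of_pos_right d (Nat.pos_of_ne_zero hu0)
      omega
    exact Fin.ext (by simpa using hij)
  · obtain ⟨g, rfl⟩ := QuotientGroup.mk_surjective X
    obtain ⟨n, rfl⟩ := hω g
    exact ⟨⟨n % d, Nat.mod_lt n (NeZero.pos d)⟩, mk_pow_mod ω n⟩

end PowerClasses

section CyclotomicNumbers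

variable {p d f : ℕ} [Fact p.Prime] {ω : (ZMod p)ˣ}

theorem ZMod.orderOf_eq_sub_one_of_forall_pow_eq
    (hω : ∀ x : (ZMod p)ˣ, ∃ n : ℕ, ω ^ n = x) :
    orderOf ω = p - 1 := by
  rw [orderOf_eq_card_of_forall_mem_zpowers fun x => ?_, Nat.card_eq_fintype_card,
    ZMod.card_units]
  obtain ⟨n, rfl⟩ := hω x
  exact ⟨n, zpow_natCast ω n⟩

theorem cycNum_ne_zero_iff (hω : ∀ x : (ZMod p)ˣ, ∃ n : ℕ, ω ^ n = x)
    (hord : orderOf ω = d * f) (hf : 0 < f) (i j : ℕ) :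
    cycNum p d f ω i j ≠ 0 ↔
      AddOneMeets d (↑(ω ^ i) : PowerClasses (ZMod p) d) ↑(ω ^ j) := by
  have : Finite {uv : ℕ × ℕ // uv.1 < f ∧ uv.2 < f ∧
      (1 : ZMod p) + (ω : ZMod p) ^ (d * uv.1 + i) = (ω : ZMod p) ^ (d * uv.2 + j)} :=
    (((Set.finite_Iio f).prod (Set.finite_Iio f)).subset fun _ h => ⟨h.1, h.2.1⟩).to_subtype
  rw [cycNum, Nat.card_ne_zero, and_iff_left this]
  constructor
  · rintro ⟨⟨u, v⟩, hu, hv, huv⟩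
    exact ⟨ω ^ (d * u + i), ω ^ (d * v + j),
      (PowerClasses.mk_eq_mk_pow_iff hω hord hf _ _).2 ⟨u, hu, rfl⟩,
      (PowerClasses.mk_eq_mk_pow_iff hω hord hf _ _).2 ⟨v, hv, rfl⟩, by simpa using huv⟩
  · rintro ⟨g, h, hg, hh, hgh⟩
    obtain ⟨u, hu, rfl⟩ := (PowerClasses.mk_eq_mk_pow_iff hω hord hf _ _).1 hg
    obtain ⟨v, hv, rfl⟩ := (PowerClasses.mk_eq_mk_pow_iff hω hord hf _ _).1 hh
    exact ⟨⟨(u, v), hu, hv, by simpa using hgh⟩⟩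

theorem sInf_matrix_pow_apply_ne_zero_eq_sWaring [NeZero d]
    (hω : ∀ x : (ZMod p)ˣ, ∃ n : ℕ, ω ^ n = x) (hord : orderOf ω = d * f) (hf : 0 < f)
    (heven : Even (d * f)) (M : Matrix (Fin d) (Fin d) ℕ)
    (hM : ∀ i j : Fin d, M i j = if cycNum p d f ω (i : ℕ) (j : ℕ) = 0 then 0 else 1)
    (α : ℕ) :
    sInf {s | 1 ≤ s ∧
      (M ^ (s - 1)) ⟨(α + theta d f) % d, Nat.mod_lt _ (NeZero.pos d)⟩
        ⟨theta d f % d, Nat.mod_lt _ (NeZero.pos d)⟩ ≠ 0} = sWaring p d ↑(ω ^ α) := by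
  have hMe : ∀ i j : Fin d, M i j ≠ 0 ↔
      AddOneMeets d (↑(ω ^ (i : ℕ)) : PowerClasses (ZMod p) d) ↑(ω ^ (j : ℕ)) := by
    intro i j
    rw [hM, ← cycNum_ne_zero_iff hω hord hf]
    split_ifs <;> simp_all
  have hneg := PowerClasses.mk_neg_one hord (Nat.mul_ne_zero (NeZero.ne d) hf.ne') heven
  have hsrc : ((ω ^ ((α + theta d f) % d) : (ZMod p)ˣ) : PowerClasses (ZMod p) d) =
      ↑(-ω ^ α) := by
    rw [PowerClasses.mk_pow_mod, pow_add, QuotientGroup.mk_mul, ← hneg, ← QuotientGroup.mk_mul,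
      mul_neg_one]
  have htgt :
      ((ω ^ (theta d f % d) : (ZMod p)ˣ) : PowerClasses (ZMod p) d) = ↑(-1 : (ZMod p)ˣ) := by
    rw [PowerClasses.mk_pow_mod, hneg]
  rw [sWaring, sInf_sum_pow_eq_sInf_reachIn]
  refine congrArg sInf (Set.ext fun s => and_congr_right fun _ => ?_)
  rw [Matrix.pow_apply_ne_zero_iff_reachIn,
    Relation.reachIn_map_iff (PowerClasses.bijective_mk_pow hω hord hf) hMe]
  dsimp only
  rw [hsrc, htgt]

theorem sWaring_pow_mod (ω : (ZMod p)ˣ) (n : ℕ) :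
    sWaring p d ↑(ω ^ (n % d)) = sWaring p d ↑(ω ^ n) := by
  rw [sWaring, sWaring, sInf_sum_pow_eq_sInf_reachIn, sInf_sum_pow_eq_sInf_reachIn,
    neg_eq_neg_one_mul, neg_eq_neg_one_mul (ω ^ n), QuotientGroup.mk_mul, QuotientGroup.mk_mul,
    PowerClasses.mk_pow_mod]

theorem gWaring_eq_sup_sWaring_pow [NeZero d] (hω : ∀ x : (ZMod p)ˣ, ∃ n : ℕ, ω ^ n = x) :
    gWaring p d = (range d).sup fun α => sWaring p d ↑(ω ^ α) := by
  rw [gWaring, ← Finset.sup'_eq_sup (nonempty_range_iff.2 (NeZero.ne d)),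
    Finset.sup'_eq_csSup_image]
  congr 1
  ext s
  constructor
  · rintro ⟨a, rfl⟩
    obtain ⟨n, rfl⟩ := hω a
    exact ⟨n % d, mem_range.2 (Nat.mod_lt _ (NeZero.pos d)), sWaring_pow_mod ω n⟩
  · rintro ⟨α, -, rfl⟩
    exact ⟨ω ^ α, rfl⟩

end CyclotomicNumbers

/-- Theorem 2: with `M` the 0-1 matrix recording nonvanishing of the
cyclotomic numbers, `g_d(p) = max_{0 ≤ α ≤ d-1} min{s ≥ 1 : (M^{s-1})_{(α+θ)θ} ≠ 0}`. -/
theorem gWaring_eq_matrix (p d f : ℕ) (hp : p.Prime) (hodd : Odd p)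
    (hd : 2 ≤ d) (hdvd : d ∣ p - 1) (hf : f = (p - 1) / d)
    (ω : (ZMod p)ˣ) (hω : ∀ x : (ZMod p)ˣ, ∃ n : ℕ, ω ^ n = x)
    (M : Matrix (Fin d) (Fin d) ℕ)
    (hM : ∀ i j : Fin d, M i j = if cycNum p d f ω (i : ℕ) (j : ℕ) = 0 then 0 else 1) :
    gWaring p d
      = Finset.sup (Finset.range d) (fun α =>
          sInf {s | 1 ≤ s ∧
            (M ^ (s - 1)) ⟨(α + theta d f) % d, Nat.mod_lt _ (by omega)⟩
              ⟨theta d f % d, Nat.mod_lt _ (by omega)⟩ ≠ 0}) := by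
  have : Fact p.Prime := ⟨hp⟩
  have : NeZero d := ⟨by omega⟩
  have hdf : d * f = p - 1 := hf ▸ Nat.mul_div_cancel' hdvd
  have hord : orderOf ω = d * f := hdf ▸ ZMod.orderOf_eq_sub_one_of_forall_pow_eq hω
  have hf0 : 0 < f := pos_of_mul_pos_right (hdf ▸ Nat.sub_pos_of_lt hp.one_lt) d.zero_le
  have heven : Even (d * f) := hdf ▸ Nat.Odd.sub_odd hodd odd_one
  rw [gWaring_eq_sup_sWaring_pow hω]
  exact Finset.sup_congr rfl fun α _ =>
    (sInf_matrix_pow_apply_ne_zero_eq_sWaring hω hord hf0 heven M hM α).symm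
end

section
/- Let p be an odd prime, d ≥ 2 with d ∣ p−1, f = (p−1)/d, and let a ∈ 𝔽_p^* with α ≡ ind_ω(a) mod d. Then in the ring of formal power series ℂ[[T]] one has the identity Σ_{k=0}^{∞} N(k,a)·T^k = (1/p)·[ 1/(1−fT) + Σ_{i=0}^{d−1} η_{i+α+θ}/(1 − η_i T) ], where N(0,a) = 0 and each 1/(1−cT) denotes the inverse of the polynomial 1−cT in ℂ[[T]]; consequently s_d(p,a) equals the T-adic order of the right-hand side. -/
open Finset

/-!
Write `D` for the set of nonzero `d`-th powers and `ψ x = ζ ^ x` for the additive character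
defined by `ζ`. Detecting `t₁ + ⋯ + tₖ = a` by orthogonality of `ψ` gives
`p · N(k,a) = ∑ₓ (∑_{y ∈ D} ψ (x y))ᵏ ψ (-x a)`. The term `x = 0` is `fᵏ`. For `x = ω ^ (d u + i)`
the inner sum is `η_i`, and summing `ψ (-x a)` over `u` gives the period of the coset of
`-a ω ^ i = ω ^ (i + α + (p-1)/2 + d m)`, which is `η_{i+α+θ}` since `(p-1)/2 ≡ θ (mod d)`. Hence
`p · N(k,a) = fᵏ + ∑ᵢ η_{i+α+θ} η_iᵏ`, the coefficient of `Tᵏ` on the right-hand side, and the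
`T`-adic order is the first `k` with `N(k,a) ≠ 0`.
-/

open PowerSeries

theorem AddChar.map_sum_eq_prod {A M ι : Type*} [AddCommMonoid A] [CommMonoid M]
    (ψ : AddChar A M) (s : Finset ι) (f : ι → A) :
    ψ (∑ i ∈ s, f i) = ∏ i ∈ s, ψ (f i) := by
  classical
  induction s using Finset.induction_on with
  | empty => simp
  | insert i s hi ih => rw [sum_insert hi, prod_insert hi, map_add_eq_mul, ih]

theorem AddChar.card_mul_card_filter_sum_eq_sum_pow {R R' : Type*} [CommRing R] [Fintype R]
    [DecidableEq R] [CommRing R'] [IsDomain R'] {ψ : AddChar R R'} (hψ : ψ.IsPrimitive)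
    (S : Finset R) (k : ℕ) (a : R) :
    (Fintype.card R : R') * #{t ∈ Fintype.piFinset fun _ : Fin k => S | ∑ i, t i = a}
      = ∑ x, (∑ y ∈ S, ψ (x * y)) ^ k * ψ (-(x * a)) := by
  have hexpand : ∀ x, (∑ y ∈ S, ψ (x * y)) ^ k * ψ (-(x * a))
      = ∑ t ∈ Fintype.piFinset fun _ : Fin k => S, ψ (x * (∑ i, t i - a)) := by
    intro x
    rw [← Fin.prod_const, prod_univ_sum, sum_mul]
    refine sum_congr rfl fun t _ => ?_
    rw [mul_sub, sub_eq_add_neg, map_add_eq_mul, mul_sum, map_sum_eq_prod]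
  simp_rw [hexpand]
  rw [sum_comm]
  simp_rw [sum_mulShift _ hψ, sub_eq_zero, Nat.cast_ite, Nat.cast_zero]
  rw [sum_ite, sum_const_zero, add_zero, sum_const, nsmul_eq_mul, mul_comm]

theorem Finset.sum_range_mul_eq_sum_sum {M : Type*} [AddCommMonoid M] (d f : ℕ) (h : ℕ → M) :
    ∑ j ∈ range (d * f), h j = ∑ i ∈ range d, ∑ u ∈ range f, h (d * u + i) := by
  induction f with
  | zero => simp
  | succ f ih => simp only [Nat.mul_succ, sum_range_add, ih, sum_range_succ, sum_add_distrib]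

theorem PowerSeries.inv_one_sub_C_mul_X {k : Type*} [Field k] (c : k) :
    (1 - C c * X)⁻¹ = mk (c ^ ·) := by
  rw [PowerSeries.inv_eq_iff_mul_eq_one (by simp)]
  simpa [rescale_mk, rescale_X] using congrArg (rescale c) (mk_one_mul_one_sub_eq_one k)

theorem mul_div_two_modEq_theta {d f : ℕ} (h : Even (d * f)) :
    d * f / 2 ≡ theta d f [MOD d] := by
  unfold theta
  split_ifs with hf
  · obtain ⟨l, rfl⟩ := hf
    rw [show d * (l + l) = 2 * (d * l) by ring, Nat.mul_div_cancel_left _ two_pos]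
    exact Nat.modEq_zero_iff_dvd.2 (dvd_mul_right d l)
  · obtain ⟨e, rfl⟩ := (Nat.even_mul.1 h).resolve_right hf
    obtain ⟨l, rfl⟩ := Nat.not_even_iff_odd.1 hf
    rw [show (e + e) * (2 * l + 1) = 2 * (e + (e + e) * l) by ring,
      Nat.mul_div_cancel_left _ two_pos, show (e + e) / 2 = e by omega]
    exact Nat.add_mul_mod_self_left e (e + e) l

section FiniteField

variable {F : Type*} [Field F] [Fintype F] {ω : Fˣ}

theorem orderOf_val_eq_card_sub_one (hω : ∀ x : Fˣ, ∃ n : ℕ, ω ^ n = x) :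
    orderOf (ω : F) = Fintype.card F - 1 := by
  rw [orderOf_units, orderOf_eq_card_of_forall_mem_zpowers fun x => ?_, Nat.card_units,
    Nat.card_eq_fintype_card]
  obtain ⟨n, rfl⟩ := hω x
  exact ⟨n, zpow_natCast ω n⟩

theorem neg_one_eq_pow_card_sub_one_div_two (hω : ∀ x : Fˣ, ∃ n : ℕ, ω ^ n = x)
    (hodd : Odd (Fintype.card F)) :
    (-1 : F) = (ω : F) ^ ((Fintype.card F - 1) / 2) := by
  have hprim : IsPrimitiveRoot (ω : F) (Fintype.card F - 1) :=
    orderOf_val_eq_card_sub_one hω ▸ IsPrimitiveRoot.orderOf _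
  have h2 : 2 ∣ Fintype.card F - 1 := (Nat.Odd.sub_odd hodd odd_one).two_dvd
  have hne : Fintype.card F - 1 ≠ 0 := by have := Fintype.one_lt_card (α := F); omega
  have hsqrt := hprim.pow_of_dvd (Nat.div_ne_zero_iff_of_dvd h2 |>.2 ⟨hne, two_ne_zero⟩)
    (Nat.div_dvd_of_dvd h2)
  rw [Nat.div_div_self h2 hne] at hsqrt
  exact hsqrt.eq_neg_one_of_two_right.symm

variable [DecidableEq F]

theorem sum_eq_add_sum_range_pow {M : Type*} [AddCommMonoid M]
    (hω : ∀ x : Fˣ, ∃ n : ℕ, ω ^ n = x) (G : F → M) :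
    ∑ x, G x = G 0 + ∑ j ∈ range (Fintype.card F - 1), G ((ω : F) ^ j) := by
  rw [← add_sum_erase _ _ (mem_univ 0), ← orderOf_val_eq_card_sub_one hω]
  congr 1
  symm
  refine sum_nbij (fun j => (ω : F) ^ j) (fun j _ => ?_) ?_ (fun x hx => ?_) fun _ _ => rfl
  · simp
  · exact (pow_injOn_Iio_orderOf (x := (ω : F))).mono fun j hj => by simpa using hj
  · obtain ⟨n, hn⟩ := hω (Units.mk0 x (mem_erase.1 hx).1)
    refine ⟨n % orderOf (ω : F), by simpa [orderOf_units] using Nat.mod_lt n (orderOf_pos ω), ?_⟩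
    dsimp only
    rw [pow_mod_orderOf, ← Units.val_pow_eq_pow_val, hn, Units.val_mk0]

variable (F) in
def nonzeroPowers (d : ℕ) : Finset F := univ.image fun b : Fˣ => (b : F) ^ d

theorem mem_nonzeroPowers {d : ℕ} {y : F} :
    y ∈ nonzeroPowers F d ↔ ∃ b : Fˣ, (b : F) ^ d = y := by
  simp [nonzeroPowers]

theorem sum_nonzeroPowers_eq_sum_range {M : Type*} [AddCommMonoid M] {d f : ℕ}
    (hω : ∀ x : Fˣ, ∃ n : ℕ, ω ^ n = x) (hdf : Fintype.card F - 1 = d * f) (g : F → M) :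
    ∑ y ∈ nonzeroPowers F d, g y = ∑ u ∈ range f, g ((ω : F) ^ (d * u)) := by
  have hord := orderOf_val_eq_card_sub_one hω
  have hpos : 0 < d * f := by have := Fintype.one_lt_card (α := F); omega
  have hd : 0 < d := Nat.pos_of_mul_pos_right hpos
  have himage : nonzeroPowers F d = (range f).image fun u => (ω : F) ^ (d * u) := by
    ext y
    simp only [mem_nonzeroPowers, mem_image, mem_range]
    constructor
    · rintro ⟨b, rfl⟩
      obtain ⟨n, rfl⟩ := hω b
      refine ⟨n % f, Nat.mod_lt _ (Nat.pos_of_mul_pos_left hpos), ?_⟩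
      rw [Units.val_pow_eq_pow_val, ← pow_mul, mul_comm n d,
        ← pow_mod_orderOf (x := (ω : F)) (n := d * n), hord, hdf, Nat.mul_mod_mul_left]
    · rintro ⟨u, -, rfl⟩
      exact ⟨ω ^ u, by rw [Units.val_pow_eq_pow_val, ← pow_mul, mul_comm]⟩
  have hlt : ∀ v ∈ range f, d * v < orderOf (ω : F) := fun v hv => by
    rw [hord, hdf]
    exact Nat.mul_lt_mul_of_pos_left (mem_range.1 hv) hd
  rw [himage, sum_image fun u hu u' hu' h =>
    Nat.eq_of_mul_eq_mul_left hd (pow_injOn_Iio_orderOf (hlt u hu) (hlt u' hu') h)]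

section Period

variable {R : Type*} [CommRing R] (ψ : AddChar F R) (d : ℕ)

def periodSum (c : F) : R := ∑ y ∈ nonzeroPowers F d, ψ (c * y)

theorem periodSum_pow_mul (b : Fˣ) (c : F) :
    periodSum ψ d ((b : F) ^ d * c) = periodSum ψ d c := by
  refine sum_nbij' (fun y => (b : F) ^ d * y) (fun y => ((b⁻¹ : Fˣ) : F) ^ d * y)
    (fun y hy => ?_) (fun y hy => ?_) (fun y _ => by simp) (fun y _ => by simp)
    fun y _ => by simp only [mul_left_comm, mul_assoc]
  · obtain ⟨e, rfl⟩ := mem_nonzeroPowers.1 hy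
    exact mem_nonzeroPowers.2 ⟨b * e, by push_cast; ring⟩
  · obtain ⟨e, rfl⟩ := mem_nonzeroPowers.1 hy
    exact mem_nonzeroPowers.2 ⟨b⁻¹ * e, by push_cast; ring⟩

theorem periodSum_pow_congr {m n : ℕ} (h : m ≡ n [MOD d]) :
    periodSum ψ d ((ω : F) ^ m) = periodSum ψ d ((ω : F) ^ n) := by
  have hmod : ∀ n, periodSum ψ d ((ω : F) ^ n) = periodSum ψ d ((ω : F) ^ (n % d)) := fun n => by
    conv_lhs => rw [← Nat.div_add_mod n d, pow_add, pow_mul', ← Units.val_pow_eq_pow_val,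
      periodSum_pow_mul]
  rw [hmod m, hmod n, show m % d = n % d from h]

theorem card_mul_card_filter_eq_add_sum_periodSum [IsDomain R] (hψ : ψ.IsPrimitive)
    (hω : ∀ x : Fˣ, ∃ n : ℕ, ω ^ n = x) {f : ℕ} (hdf : Fintype.card F - 1 = d * f)
    (k : ℕ) (a : F) :
    (Fintype.card F : R) * #{t ∈ Fintype.piFinset fun _ : Fin k => nonzeroPowers F d |
        ∑ i, t i = a}
      = (f : R) ^ k + ∑ i ∈ range d,
          periodSum ψ d ((ω : F) ^ i) ^ k * periodSum ψ d (-((ω : F) ^ i * a)) := by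
  rw [AddChar.card_mul_card_filter_sum_eq_sum_pow hψ, sum_eq_add_sum_range_pow hω, hdf,
    sum_range_mul_eq_sum_sum]
  simp only [← periodSum.eq_1]
  congr 1
  · have hcard : #(nonzeroPowers F d) = f := by
      simpa using sum_nonzeroPowers_eq_sum_range hω hdf fun _ => (1 : ℕ)
    simp [periodSum, hcard]
  · refine sum_congr rfl fun i _ => ?_
    rw [periodSum.eq_1 ψ d (-((ω : F) ^ i * a)), sum_nonzeroPowers_eq_sum_range hω hdf, mul_sum]
    refine sum_congr rfl fun u _ => ?_
    rw [periodSum_pow_congr ψ d (Nat.mul_add_mod d u i), pow_add]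
    congr 2
    ring

end Period

end FiniteField

section Waring

variable {p d : ℕ} [NeZero p]

theorem waringCount_ne_zero_iff (k : ℕ) (a : ZMod p) :
    waringCount p d k a ≠ 0 ↔ ∃ u : Fin k → (ZMod p)ˣ, a = ∑ i, (u i : ZMod p) ^ d := by
  rw [waringCount, Nat.card_ne_zero]
  constructor
  · rintro ⟨⟨⟨t, ht, rfl⟩⟩, -⟩
    choose b hb using ht
    exact ⟨b, by simp_rw [hb]⟩
  · rintro ⟨u, rfl⟩
    exact ⟨⟨⟨fun i => (u i : ZMod p) ^ d, fun i => ⟨u i, rfl⟩, rfl⟩⟩, inferInstance⟩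

theorem waringCount_zero_left {a : ZMod p} (ha : a ≠ 0) : waringCount p d 0 a = 0 := by
  by_contra h
  obtain ⟨u, hu⟩ := (waringCount_ne_zero_iff 0 a).1 h
  exact ha (by simpa using hu)

theorem order_mk_waringCount [Fact (1 < p)] (a : (ZMod p)ˣ) :
    order (mk fun k => (waringCount p d k a : ℂ)) = sWaring p d a := by
  have hne : {k | 1 ≤ k ∧ ∃ u : Fin k → (ZMod p)ˣ,
      (a : ZMod p) = ∑ i, (u i : ZMod p) ^ d}.Nonempty :=
    ⟨(a : ZMod p).val, ZMod.val_pos.2 a.ne_zero, fun _ => 1, by simp⟩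
  obtain ⟨-, hmin⟩ : sWaring p d a ∈ _ := Nat.sInf_mem hne
  rw [order_eq_nat]
  refine ⟨by simpa using (waringCount_ne_zero_iff _ _).2 hmin, fun i hi => ?_⟩
  rw [coeff_mk, Nat.cast_eq_zero]
  by_contra h
  rcases Nat.eq_zero_or_pos i with rfl | hpos
  · exact h (waringCount_zero_left a.ne_zero)
  · have hle : sWaring p d a ≤ i := Nat.sInf_le ⟨hpos, (waringCount_ne_zero_iff _ _).1 h⟩
    exact hle.not_gt hi

end Waring

section ZModPrime

variable {p d f : ℕ} [Fact p.Prime] {ω : (ZMod p)ˣ} {ζ : ℂ}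

theorem waringCount_eq_card_filter (k : ℕ) (a : ZMod p) :
    waringCount p d k a
      = #{t ∈ Fintype.piFinset fun _ : Fin k => nonzeroPowers (ZMod p) d | ∑ i, t i = a} := by
  rw [waringCount, Nat.card_eq_fintype_card, Fintype.card_subtype]
  congr 1
  ext t
  simp [Fintype.mem_piFinset, mem_nonzeroPowers]

theorem gaussPeriod_eq_periodSum (hζ : ζ ^ p = 1) (hω : ∀ x : (ZMod p)ˣ, ∃ n : ℕ, ω ^ n = x)
    (hdf : p - 1 = d * f) (j : ℕ) :
    gaussPeriod p d f ω ζ j = periodSum (AddChar.zmodChar p hζ) d ((ω : ZMod p) ^ j) := by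
  rw [periodSum, sum_nonzeroPowers_eq_sum_range hω (by rwa [ZMod.card]), gaussPeriod]
  simp_rw [AddChar.zmodChar_apply, pow_add, mul_comm]

theorem natCast_mul_waringCount_eq (hodd : Odd p) (hω : ∀ x : (ZMod p)ˣ, ∃ n : ℕ, ω ^ n = x)
    (hζ : IsPrimitiveRoot ζ p) (hdf : p - 1 = d * f) {a : ZMod p} {α m : ℕ}
    (hα : a = (ω : ZMod p) ^ (α + d * m)) (k : ℕ) :
    (p : ℂ) * waringCount p d k a
      = (f : ℂ) ^ k + ∑ i ∈ range d,
          gaussPeriod p d f ω ζ (i + α + theta d f) * gaussPeriod p d f ω ζ i ^ k := by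
  have hcard : Fintype.card (ZMod p) - 1 = d * f := by rwa [ZMod.card]
  have hshift : ∀ i, periodSum (AddChar.zmodChar p hζ.pow_eq_one) d (-((ω : ZMod p) ^ i * a))
      = gaussPeriod p d f ω ζ (i + α + theta d f) := fun i => by
    have htheta := mul_div_two_modEq_theta (hdf ▸ Nat.Odd.sub_odd hodd odd_one)
    rw [gaussPeriod_eq_periodSum hζ.pow_eq_one hω hdf, hα, ← neg_one_mul,
      neg_one_eq_pow_card_sub_one_div_two hω (by rwa [ZMod.card]), hcard, ← pow_add, ← pow_add]
    refine periodSum_pow_congr _ _ ?_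
    calc d * f / 2 + (i + (α + d * m)) = i + α + d * f / 2 + d * m := by ring
      _ ≡ i + α + d * f / 2 [MOD d] := Nat.add_mul_mod_self_left _ d m
      _ ≡ i + α + theta d f [MOD d] := htheta.add_left _
  have hp : (p : ℂ) = Fintype.card (ZMod p) := by rw [ZMod.card]
  rw [waringCount_eq_card_filter, hp, card_mul_card_filter_eq_add_sum_periodSum _ _
    (AddChar.zmodChar_primitive_of_primitive_root p hζ) hω hcard]
  simp_rw [hshift, ← gaussPeriod_eq_periodSum hζ.pow_eq_one hω hdf, mul_comm]

theorem mk_waringCount_eq (hodd : Odd p) (hω : ∀ x : (ZMod p)ˣ, ∃ n : ℕ, ω ^ n = x)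
    (hζ : IsPrimitiveRoot ζ p) (hdf : p - 1 = d * f) {a : ZMod p} {α m : ℕ}
    (hα : a = (ω : ZMod p) ^ (α + d * m)) :
    mk (fun k => (waringCount p d k a : ℂ))
      = C (R := ℂ) (1 / p) * ((1 - C (R := ℂ) (f : ℂ) * X)⁻¹
          + ∑ i ∈ range d, C (R := ℂ) (gaussPeriod p d f ω ζ (i + α + theta d f))
              * (1 - C (R := ℂ) (gaussPeriod p d f ω ζ i) * X)⁻¹) := by
  ext k
  simp only [inv_one_sub_C_mul_X, coeff_mk, coeff_C_mul, map_add, map_sum]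
  rw [← natCast_mul_waringCount_eq hodd hω hζ hdf hα k]
  field_simp [(Fact.out : p.Prime).ne_zero]

end ZModPrime

open PowerSeries in
theorem waringCount_generating_function_general (p d f : ℕ) (hp : p.Prime) (hodd : Odd p)
    (hdvd : d ∣ p - 1) (hf : f = (p - 1) / d)
    (ω : (ZMod p)ˣ) (hω : ∀ x : (ZMod p)ˣ, ∃ n : ℕ, ω ^ n = x)
    (ζ : ℂ) (hζ : IsPrimitiveRoot ζ p)
    (a : (ZMod p)ˣ) (α : ℕ) (hα : ∃ m : ℕ, (a : ZMod p) = (ω : ZMod p) ^ (α + d * m)) :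
    PowerSeries.mk (fun k => if k = 0 then (0 : ℂ) else (waringCount p d k (a : ZMod p) : ℂ))
      = C (R := ℂ) (1 / p) * ((1 - C (R := ℂ) (f : ℂ) * X)⁻¹
          + ∑ i ∈ Finset.range d, C (R := ℂ) (gaussPeriod p d f ω ζ (i + α + theta d f))
              * (1 - C (R := ℂ) (gaussPeriod p d f ω ζ i) * X)⁻¹)
    ∧ (sWaring p d (a : ZMod p) : ℕ∞)
      = PowerSeries.order (C (R := ℂ) (1 / p) * ((1 - C (R := ℂ) (f : ℂ) * X)⁻¹
          + ∑ i ∈ Finset.range d, C (R := ℂ) (gaussPeriod p d f ω ζ (i + α + theta d f))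
              * (1 - C (R := ℂ) (gaussPeriod p d f ω ζ i) * X)⁻¹)) := by
  have := Fact.mk hp
  obtain ⟨m, hα⟩ := hα
  have hdf : p - 1 = d * f := by rw [hf, Nat.mul_div_cancel' hdvd]
  have hN : (fun k => if k = 0 then (0 : ℂ) else (waringCount p d k (a : ZMod p) : ℂ))
      = fun k => (waringCount p d k (a : ZMod p) : ℂ) := by
    funext k
    split_ifs with hk <;> simp [hk, waringCount_zero_left a.ne_zero]
  rw [hN, ← mk_waringCount_eq hodd hω hζ hdf hα, order_mk_waringCount]
  exact ⟨rfl, rfl⟩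

open PowerSeries in
/-- in `ℂ[[T]]`,
`Σ_k N(k,a)·T^k = (1/p)·[1/(1−fT) + Σ_{i=0}^{d-1} η_{i+α+θ}/(1−η_i T)]` (with `N(0,a) = 0`),
and `s_d(p,a)` is the `T`-adic order of the right-hand side. -/
theorem waringCount_generating_function (p d f : ℕ) (hp : p.Prime) (hodd : Odd p)
    (hd : 2 ≤ d) (hdvd : d ∣ p - 1) (hf : f = (p - 1) / d)
    (ω : (ZMod p)ˣ) (hω : ∀ x : (ZMod p)ˣ, ∃ n : ℕ, ω ^ n = x)
    (ζ : ℂ) (hζ : IsPrimitiveRoot ζ p)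
    (a : (ZMod p)ˣ) (α : ℕ) (hα : ∃ m : ℕ, (a : ZMod p) = (ω : ZMod p) ^ (α + d * m)) :
    PowerSeries.mk (fun k => if k = 0 then (0 : ℂ) else (waringCount p d k (a : ZMod p) : ℂ))
      = C (R := ℂ) (1 / p) * ((1 - C (R := ℂ) (f : ℂ) * X)⁻¹
          + ∑ i ∈ Finset.range d, C (R := ℂ) (gaussPeriod p d f ω ζ (i + α + theta d f))
              * (1 - C (R := ℂ) (gaussPeriod p d f ω ζ i) * X)⁻¹)
    ∧ (sWaring p d (a : ZMod p) : ℕ∞)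
      = PowerSeries.order (C (R := ℂ) (1 / p) * ((1 - C (R := ℂ) (f : ℂ) * X)⁻¹
          + ∑ i ∈ Finset.range d, C (R := ℂ) (gaussPeriod p d f ω ζ (i + α + theta d f))
              * (1 - C (R := ℂ) (gaussPeriod p d f ω ζ i) * X)⁻¹)) :=
  waringCount_generating_function_general p d f hp hodd hdvd hf ω hω ζ hζ a α hα
end

section
/- (Theorem 4) Let p be a prime with p ≡ 1 mod 3. Then g_3(p) = 3 if p = 7, and g_3(p) = 2 for every other such prime p. -/
open Finset

/-!
Let `χ` be a character of order `3` of `𝔽_q`, `3 ∣ q - 1`. As `∑_{j<3} χ^j(u)` vanishes unless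
`u` is a nonzero cube, if `a ≠ 0` is not a sum of two nonzero cubes then
`0 = ∑_u (∑_j χ^j(u)) (∑_k χ^k(a - u)) = ∑_{j,k} (χ^j χ^k)(a) J(χ^j, χ^k)`.
Here the term `j = k = 0` is `q - 2`, the Jacobi sums `J(χ, χ)` and `J(χ², χ²)` have absolute
value `√q`, and the six others (`J(1, ψ) = J(ψ, 1) = -1`, `J(χ, χ⁻¹) = -χ(-1)`) absolute value
at most `1`; so `q - 2 ≤ 6 + 2√q`, i.e. `q ≤ 16`. Since some unit is not a cube, `g_3(p) = 2`
for `p > 16`; the primes `7` and `13` are settled by computation: in `𝔽_7` the nonzero cubes are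
`±1`, so `3 = 1 + 1 + 1` needs three of them.
-/

namespace MulChar

variable {R : Type*} [CommRing R]

lemma apply_pow_orderOf {M : Type*} [CommMonoid M] (χ : MulChar M R) (v : Mˣ) :
    χ ((v : M) ^ orderOf χ) = 1 := by
  rw [map_pow, ← pow_apply_coe, pow_orderOf_eq_one, one_apply_coe]

lemma exists_not_pow_orderOf_eq {M : Type*} [CommMonoid M] {χ : MulChar M R} (hχ : χ ≠ 1) :
    ∃ b : Mˣ, ¬∃ v : Mˣ, (v : M) ^ orderOf χ = b := by
  obtain ⟨b, hb⟩ := ne_one_iff.mp hχ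
  exact ⟨b, fun ⟨v, hv⟩ => hb (by rw [← hv, apply_pow_orderOf])⟩

variable {F : Type*} [Field F] [Fintype F]

lemma exists_pow_orderOf_eq_of_apply_eq_one (χ : MulChar F R) {u : Fˣ} (hu : χ u = 1) :
    ∃ v : Fˣ, v ^ orderOf χ = u := by
  obtain ⟨g, hg⟩ := IsCyclic.exists_monoid_generator (α := Fˣ)
  obtain ⟨k, rfl⟩ := Submonoid.mem_powers_iff _ _ |>.mp (hg u)
  have hk : χ ^ k = 1 := by
    rw [eq_iff (fun x => mem_powers_iff_mem_zpowers.mp (hg x)), pow_apply_coe, one_apply_coe,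
      ← hu, Units.val_pow_eq_pow_val, map_pow]
  obtain ⟨m, rfl⟩ := orderOf_dvd_of_pow_eq_one hk
  exact ⟨g ^ m, by rw [← pow_mul, mul_comm]⟩

lemma sum_pow_apply_eq_zero_of_not_exists_pow [IsDomain R] {χ : MulChar F R} {n : ℕ}
    (hχ : orderOf χ = n) {u : F} (hu : ¬∃ v : Fˣ, (v : F) ^ n = u) :
    ∑ j ∈ range n, (χ ^ j) u = 0 := by
  subst hχ
  rcases eq_or_ne u 0 with rfl | hu0
  · simp
  lift u to Fˣ using hu0.isUnit
  have hne : χ u ≠ 1 := fun h => hu <| by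
    obtain ⟨v, hv⟩ := exists_pow_orderOf_eq_of_apply_eq_one χ h
    exact ⟨v, by rw [← hv, Units.val_pow_eq_pow_val]⟩
  have hgeom := geom_sum_mul (χ u) (orderOf χ)
  rw [← pow_apply_coe, pow_orderOf_eq_one, one_apply_coe, sub_self] at hgeom
  simpa only [pow_apply_coe] using (mul_eq_zero.mp hgeom).resolve_right (sub_ne_zero.mpr hne)

lemma sum_apply_mul_apply_sub (ψ φ : MulChar F R) {a : F} (ha : a ≠ 0) :
    ∑ u, ψ u * φ (a - u) = (ψ * φ) a * jacobiSum ψ φ := by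
  rw [jacobiSum, mul_sum, ← Equiv.sum_comp (Equiv.mulLeft₀ a ha)]
  refine sum_congr rfl fun t _ => ?_
  rw [Equiv.mulLeft₀_apply, ← mul_one_sub, map_mul, map_mul, coeToFun_mul, Pi.mul_apply]
  ring

lemma sum_mul_sum_pow_apply_sub (χ : MulChar F R) (n : ℕ) {a : F} (ha : a ≠ 0) :
    ∑ u, (∑ j ∈ range n, (χ ^ j) u) * ∑ k ∈ range n, (χ ^ k) (a - u) =
      ∑ j ∈ range n, ∑ k ∈ range n, (χ ^ j * χ ^ k) a * jacobiSum (χ ^ j) (χ ^ k) := by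
  simp_rw [sum_mul_sum]
  rw [sum_comm]
  refine sum_congr rfl fun j _ => ?_
  rw [sum_comm]
  exact sum_congr rfl fun k _ => sum_apply_mul_apply_sub _ _ ha

lemma norm_apply_le_one (χ : MulChar F ℂ) (a : F) : ‖χ a‖ ≤ 1 := by
  rcases eq_or_ne a 0 with rfl | ha
  · simp
  refine (Complex.norm_eq_one_of_pow_eq_one ?_ (orderOf_pos χ).ne').le
  rw [← pow_apply' χ (orderOf_pos χ).ne', pow_orderOf_eq_one, one_apply ha.isUnit]

end MulChar

section JacobiSum

variable {F : Type*} [Field F] [Fintype F]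

lemma norm_apply_mul_jacobiSum_le (ψ φ : MulChar F ℂ) (a : F) :
    ‖(ψ * φ) a * jacobiSum ψ φ‖ ≤ ‖jacobiSum ψ φ‖ := by
  rw [norm_mul]
  exact mul_le_of_le_one_left (norm_nonneg _) ((ψ * φ).norm_apply_le_one a)

lemma norm_jacobiSum_inv_le_one {ψ : MulChar F ℂ} (hψ : ψ ≠ 1) : ‖jacobiSum ψ ψ⁻¹‖ ≤ 1 := by
  rw [jacobiSum_nontrivial_inv hψ, norm_neg]
  exact ψ.norm_apply_le_one _

lemma norm_jacobiSum_eq_sqrt_card {ψ φ : MulChar F ℂ} (hψ : ψ ≠ 1) (hφ : φ ≠ 1)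
    (hψφ : ψ * φ ≠ 1) : ‖jacobiSum ψ φ‖ = √(Fintype.card F) := by
  have hchar : ringChar ℂ ≠ ringChar F := by
    rw [ringChar.eq_zero]
    exact (CharP.char_ne_zero_of_finite F _).symm
  have h := jacobiSum_mul_jacobiSum_inv hchar hψ hφ hψφ
  have hconj : jacobiSum ψ⁻¹ φ⁻¹ = starRingEnd ℂ (jacobiSum ψ φ) := by
    simp only [jacobiSum, map_sum, map_mul, ← MulChar.star_apply', Complex.star_def]
  rw [hconj, Complex.mul_conj, ← Complex.ofReal_natCast, Complex.ofReal_inj] at h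
  rw [Complex.norm_def, h]

lemma norm_sum_jacobiSum_cubic_sub_le {χ : MulChar F ℂ} (hχ : orderOf χ = 3) {a : F}
    (ha : a ≠ 0) :
    ‖∑ j ∈ range 3, ∑ k ∈ range 3, (χ ^ j * χ ^ k) a * jacobiSum (χ ^ j) (χ ^ k)
        - (Fintype.card F - 2)‖ ≤ 6 + 2 * √(Fintype.card F) := by
  have h3 : χ ^ 3 = 1 := hχ ▸ pow_orderOf_eq_one χ
  have h1 : χ ≠ 1 := by rintro rfl; simp at hχ
  have h2 : χ ^ 2 ≠ 1 := fun h => by have := orderOf_le_of_pow_eq_one two_pos h; omega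
  have h12 : χ * χ ^ 2 = 1 := by rw [← pow_succ', h3]
  have h22 : χ ^ 2 * χ ^ 2 = χ := by
    rw [← pow_add, show 2 + 2 = 3 + 1 by rfl, pow_succ, h3, one_mul]
  have hJ1 : ∀ ψ : MulChar F ℂ, ψ ≠ 1 → jacobiSum 1 ψ = -1 ∧ jacobiSum ψ 1 = -1 :=
    fun ψ hψ => ⟨jacobiSum_one_nontrivial hψ, jacobiSum_comm ψ 1 ▸ jacobiSum_one_nontrivial hψ⟩
  have hJ12 : ‖jacobiSum χ (χ ^ 2)‖ ≤ 1 :=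
    eq_inv_of_mul_eq_one_right h12 ▸ norm_jacobiSum_inv_le_one h1
  have hJ21 : ‖jacobiSum (χ ^ 2) χ‖ ≤ 1 := jacobiSum_comm χ (χ ^ 2) ▸ hJ12
  have hJ11 : ‖jacobiSum χ χ‖ = √(Fintype.card F) :=
    norm_jacobiSum_eq_sqrt_card h1 h1 (by rwa [← sq])
  have hJ22 : ‖jacobiSum (χ ^ 2) (χ ^ 2)‖ = √(Fintype.card F) :=
    norm_jacobiSum_eq_sqrt_card h2 h2 (by rwa [h22])
  have hJ (ψ φ : MulChar F ℂ) {b : ℝ} (hb : ‖jacobiSum ψ φ‖ ≤ b) :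
      ‖(ψ * φ) a * jacobiSum ψ φ‖ ≤ b :=
    (norm_apply_mul_jacobiSum_le ψ φ a).trans hb
  have hneg (ψ : MulChar F ℂ) : ‖ψ a * -1‖ ≤ 1 := by simpa using ψ.norm_apply_le_one a
  simp only [sum_range_succ, sum_range_zero, zero_add, pow_zero, pow_one, one_mul, mul_one,
    jacobiSum_one_one, MulChar.one_apply ha.isUnit, (hJ1 χ h1).1, (hJ1 χ h1).2, (hJ1 _ h2).1,
    (hJ1 _ h2).2]
  calc _ = ‖χ a * -1 + (χ ^ 2) a * -1 + χ a * -1 + (χ * χ) a * jacobiSum χ χ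
        + (χ * χ ^ 2) a * jacobiSum χ (χ ^ 2) + (χ ^ 2) a * -1
        + (χ ^ 2 * χ) a * jacobiSum (χ ^ 2) χ
        + (χ ^ 2 * χ ^ 2) a * jacobiSum (χ ^ 2) (χ ^ 2)‖ := by
          congr 1; ring
    _ ≤ 1 + 1 + 1 + √(Fintype.card F) + 1 + 1 + 1 + √(Fintype.card F) :=
          norm_add_le_of_le (norm_add_le_of_le (norm_add_le_of_le (norm_add_le_of_le
            (norm_add_le_of_le (norm_add_le_of_le (norm_add_le_of_le (hneg χ) (hneg _))
            (hneg χ)) (hJ _ _ hJ11.le)) (hJ _ _ hJ12)) (hneg _))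
            (hJ _ _ hJ21)) (hJ _ _ hJ22.le)
    _ = 6 + 2 * √(Fintype.card F) := by ring

end JacobiSum

namespace FiniteField

variable {F : Type*} [Field F] [Fintype F]

lemma exists_not_pow_three_eq (h3 : 3 ∣ Fintype.card F - 1) :
    ∃ b : Fˣ, ¬∃ v : Fˣ, (v : F) ^ 3 = b := by
  obtain ⟨χ, hχ⟩ := MulChar.exists_mulChar_orderOf F h3
    (Complex.isPrimitiveRoot_exp 3 (by norm_num))
  have hχ1 : χ ≠ 1 := by rintro rfl; simp at hχ
  exact hχ ▸ MulChar.exists_not_pow_orderOf_eq hχ1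

theorem exists_pow_three_add_pow_three_eq (h3 : 3 ∣ Fintype.card F - 1)
    (hq : 16 < Fintype.card F) {a : F} (ha : a ≠ 0) :
    ∃ x y : Fˣ, (x : F) ^ 3 + (y : F) ^ 3 = a := by
  obtain ⟨χ, hχ⟩ := MulChar.exists_mulChar_orderOf F h3
    (Complex.isPrimitiveRoot_exp 3 (by norm_num))
  by_contra hno
  have hvanish : ∑ u, (∑ j ∈ range 3, (χ ^ j) u) * ∑ k ∈ range 3, (χ ^ k) (a - u) = 0 := by
    refine sum_eq_zero fun u _ => ?_
    by_cases hu : ∃ x : Fˣ, (x : F) ^ 3 = u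
    · obtain ⟨x, rfl⟩ := hu
      refine mul_eq_zero_of_right _ (MulChar.sum_pow_apply_eq_zero_of_not_exists_pow hχ ?_)
      rintro ⟨y, hy⟩
      exact hno ⟨x, y, by rw [hy, add_sub_cancel]⟩
    · exact mul_eq_zero_of_left (MulChar.sum_pow_apply_eq_zero_of_not_exists_pow hχ hu) _
  have hq' : (16 : ℝ) < Fintype.card F := by exact_mod_cast hq
  have hbound := norm_sum_jacobiSum_cubic_sub_le hχ ha
  rw [← χ.sum_mul_sum_pow_apply_sub 3 ha, hvanish, zero_sub, norm_neg,
    show (Fintype.card F : ℂ) - 2 = ((Fintype.card F - 2 : ℝ) : ℂ) by push_cast; ring,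
    Complex.norm_of_nonneg (by linarith)] at hbound
  have hsq := Real.sq_sqrt (Nat.cast_nonneg (α := ℝ) (Fintype.card F))
  nlinarith [Real.sqrt_nonneg (Fintype.card F : ℝ)]

end FiniteField

section Waring

variable {p d : ℕ}

lemma sWaring_sum_le {k : ℕ} (hk : 1 ≤ k) (u : Fin k → (ZMod p)ˣ) :
    sWaring p d (∑ i, (u i : ZMod p) ^ d) ≤ k :=
  Nat.sInf_le ⟨hk, u, rfl⟩

lemma sWaring_pow_le_one (v : (ZMod p)ˣ) : sWaring p d ((v : ZMod p) ^ d) ≤ 1 := by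
  simpa using sWaring_sum_le (d := d) le_rfl ![v]

lemma sWaring_pow_add_pow_le_two (x y : (ZMod p)ˣ) :
    sWaring p d ((x : ZMod p) ^ d + (y : ZMod p) ^ d) ≤ 2 := by
  simpa [Fin.sum_univ_two] using sWaring_sum_le (d := d) one_le_two ![x, y]

lemma sWaring_pow_add_pow_add_pow_le_three (x y z : (ZMod p)ˣ) :
    sWaring p d ((x : ZMod p) ^ d + (y : ZMod p) ^ d + (z : ZMod p) ^ d) ≤ 3 := by
  simpa [Fin.sum_univ_three] using sWaring_sum_le (d := d) (by norm_num) ![x, y, z]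

lemma le_sWaring {a : ZMod p} {n : ℕ}
    (hrep : ∃ k, 1 ≤ k ∧ ∃ u : Fin k → (ZMod p)ˣ, a = ∑ i, (u i : ZMod p) ^ d)
    (hn : ∀ k, 1 ≤ k → k < n → ∀ u : Fin k → (ZMod p)ˣ, a ≠ ∑ i, (u i : ZMod p) ^ d) :
    n ≤ sWaring p d a :=
  le_csInf hrep fun k ⟨hk, u, hu⟩ => not_lt.mp fun hkn => hn k hk hkn u hu

lemma gWaring_eq {n : ℕ} (hle : ∀ a : (ZMod p)ˣ, sWaring p d a ≤ n)
    (hge : ∃ a : (ZMod p)ˣ, n ≤ sWaring p d a) : gWaring p d = n := by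
  obtain ⟨b, hb⟩ := hge
  have hub : ∀ s ∈ {s | ∃ a : (ZMod p)ˣ, s = sWaring p d a}, s ≤ n := by
    rintro _ ⟨a, rfl⟩
    exact hle a
  exact le_antisymm (csSup_le ⟨_, b, rfl⟩ hub) (le_csSup_of_le ⟨n, hub⟩ ⟨b, rfl⟩ hb)

lemma gWaring_eq_two
    (hrep : ∀ a : (ZMod p)ˣ, (∃ v : (ZMod p)ˣ, (v : ZMod p) ^ d = a) ∨
      ∃ x y : (ZMod p)ˣ, (x : ZMod p) ^ d + (y : ZMod p) ^ d = a)
    (hb : ∃ b : (ZMod p)ˣ, ¬∃ v : (ZMod p)ˣ, (v : ZMod p) ^ d = b) : gWaring p d = 2 := by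
  refine gWaring_eq (fun a => ?_) ?_
  · rcases hrep a with ⟨v, hv⟩ | ⟨x, y, hxy⟩
    · exact hv ▸ (sWaring_pow_le_one v).trans one_le_two
    · exact hxy ▸ sWaring_pow_add_pow_le_two x y
  obtain ⟨b, hb⟩ := hb
  obtain ⟨x, y, hxy⟩ := (hrep b).resolve_left hb
  refine ⟨b, le_sWaring ⟨2, one_le_two, ![x, y], by simp [← hxy, Fin.sum_univ_two]⟩ ?_⟩
  intro k hk hk2 u hu
  obtain rfl : k = 1 := by omega
  exact hb ⟨u 0, by simp [hu]⟩

end Waring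

lemma gWaring_seven_three : gWaring 7 3 = 3 := by
  refine gWaring_eq (fun a => ?_) ?_
  · obtain ⟨v, hv⟩ | ⟨x, y, hxy⟩ | ⟨x, y, z, hxyz⟩ :
        (∃ v : (ZMod 7)ˣ, (v : ZMod 7) ^ 3 = a) ∨
        (∃ x y : (ZMod 7)ˣ, (x : ZMod 7) ^ 3 + (y : ZMod 7) ^ 3 = a) ∨
        ∃ x y z : (ZMod 7)ˣ, (x : ZMod 7) ^ 3 + (y : ZMod 7) ^ 3 + (z : ZMod 7) ^ 3 = a := by
      revert a; decide
    · exact hv ▸ (sWaring_pow_le_one v).trans (by norm_num)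
    · exact hxy ▸ (sWaring_pow_add_pow_le_two x y).trans (by norm_num)
    · exact hxyz ▸ sWaring_pow_add_pow_add_pow_le_three x y z
  obtain ⟨b, hb3, hb1, hb2⟩ : ∃ b : (ZMod 7)ˣ, (b : ZMod 7) = 1 + 1 + 1 ∧
      (∀ v : (ZMod 7)ˣ, (v : ZMod 7) ^ 3 ≠ b) ∧
      ∀ x y : (ZMod 7)ˣ, (x : ZMod 7) ^ 3 + (y : ZMod 7) ^ 3 ≠ b := by
    decide
  refine ⟨b, le_sWaring ⟨3, by norm_num, ![1, 1, 1], by simp [hb3, Fin.sum_univ_three]⟩ ?_⟩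
  intro k hk hk3 u hu
  interval_cases k
  · exact hb1 (u 0) (by simp [hu])
  · exact hb2 (u 0) (u 1) (by simp [hu, Fin.sum_univ_two])

/-- Theorem 4: for a prime `p ≡ 1 mod 3`, `g_3(p) = 3` if `p = 7`
and `g_3(p) = 2` otherwise. -/
theorem gWaring_three (p : ℕ) (hp : p.Prime) (h3 : p % 3 = 1) :
    gWaring p 3 = if p = 7 then 3 else 2 := by
  have : Fact p.Prime := ⟨hp⟩
  split_ifs with h7
  · subst h7
    exact gWaring_seven_three
  have hcard : 3 ∣ Fintype.card (ZMod p) - 1 := by rw [ZMod.card]; omega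
  refine gWaring_eq_two (fun a => ?_) (FiniteField.exists_not_pow_three_eq hcard)
  by_cases h13 : p = 13
  · subst h13
    revert a; decide
  have hp16 : 16 < Fintype.card (ZMod p) := by
    rw [ZMod.card]
    by_contra! hle
    interval_cases p <;> first | omega | norm_num at hp
  exact .inr (FiniteField.exists_pow_three_add_pow_three_eq hcard hp16 a.ne_zero)
end

section
/- (Theorem 5) Let p be a prime with p ≡ 1 mod 4. Then g_4(p) = 4 if p = 5; g_4(p) = 3 if p ∈ {13, 17, 29}; and g_4(p) = 2 for every other such prime p. -/
open Finset

/-!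
Let `χ` be a complex character of order `4` of `𝔽_p`. The number of ways to write `a ≠ 0` as
`x⁴ + y⁴` with `x, y ≠ 0` is, up to the factor `16`,
`∑_x (∑_j χʲ(x)) (∑_k χᵏ(a - x)) = ∑_{j,k} χʲ⁺ᵏ(a) J(χʲ, χᵏ)`.
The main term `J(1, 1) = p - 2` beats the nine Jacobi sums of absolute value `1` and the six of
absolute value `√p` as soon as `p ≥ 61`; as `4 ∣ p - 1`, some unit is not a fourth power, so
`g₄(p) = 2`. The primes `p < 61` are settled by computing the sets of sums of `k` nonzero
fourth powers.
-/

def powSums (R : Type*) [Semiring R] [Fintype R] [DecidableEq R] (d : ℕ) : ℕ → Finset R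
  | 0 => {0}
  | k + 1 => image₂ (· + ·) ((univ.filter (· ≠ 0)).image (· ^ d)) (powSums R d k)

theorem mem_powSums {F : Type*} [DivisionSemiring F] [Fintype F] [DecidableEq F] {d k : ℕ}
    {a : F} : a ∈ powSums F d k ↔ ∃ u : Fin k → Fˣ, a = ∑ i, (u i : F) ^ d := by
  induction k generalizing a with
  | zero => simp [powSums]
  | succ k ih =>
    simp only [powSums, mem_image₂, mem_image, mem_filter, mem_univ, true_and, ih,
      Fin.exists_fin_succ_pi, Fin.sum_univ_succ, Fin.cons_zero, Fin.cons_succ]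
    constructor
    · rintro ⟨_, ⟨x, hx, rfl⟩, _, ⟨v, rfl⟩, rfl⟩
      exact ⟨Units.mk0 x hx, v, rfl⟩
    · rintro ⟨u, v, rfl⟩
      exact ⟨_, ⟨u, u.ne_zero, rfl⟩, _, ⟨v, rfl⟩, rfl⟩

section Waring

variable {p d : ℕ}

theorem sWaring_eq_sInf_powSums [Fact p.Prime] (a : ZMod p) :
    sWaring p d a = sInf {k | 1 ≤ k ∧ a ∈ powSums (ZMod p) d k} := by
  simp only [sWaring, mem_powSums]

theorem sWaring_le_of_mem_powSums [Fact p.Prime] {a : ZMod p} {k : ℕ} (hk : 1 ≤ k)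
    (ha : a ∈ powSums (ZMod p) d k) : sWaring p d a ≤ k := by
  rw [sWaring_eq_sInf_powSums]
  exact Nat.sInf_le ⟨hk, ha⟩

theorem gWaring_eq_of_mem_powSums [NeZero p] (hp : p.Prime) {m : ℕ}
    (hle : ∀ a : ZMod p, a ≠ 0 → ∃ k ∈ Icc 1 m, a ∈ powSums (ZMod p) d k)
    (hge : ∃ a : ZMod p, a ≠ 0 ∧ ∀ k ∈ Ico 1 m, a ∉ powSums (ZMod p) d k) :
    gWaring p d = m := by
  have := Fact.mk hp
  have hs_le : ∀ a : ZMod p, a ≠ 0 → sWaring p d a ≤ m := fun a ha => by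
    obtain ⟨k, hk, hak⟩ := hle a ha
    exact (sWaring_le_of_mem_powSums (mem_Icc.1 hk).1 hak).trans (mem_Icc.1 hk).2
  obtain ⟨a₀, ha₀, hfew⟩ := hge
  have hs_ge : m ≤ sWaring p d a₀ := by
    obtain ⟨k, hk, hak⟩ := hle a₀ ha₀
    rw [sWaring_eq_sInf_powSums]
    refine le_csInf ⟨k, (mem_Icc.1 hk).1, hak⟩ fun j ⟨hj, haj⟩ => ?_
    exact not_lt.1 fun hjm => hfew j (mem_Ico.2 ⟨hj, hjm⟩) haj
  refine IsGreatest.csSup_eq ⟨⟨Units.mk0 a₀ ha₀, ((hs_le a₀ ha₀).antisymm hs_ge).symm⟩, ?_⟩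
  rintro _ ⟨a, rfl⟩
  exact hs_le a a.ne_zero

end Waring

theorem exists_forall_pow_ne_of_dvd_card {G : Type*} [Group G] [Finite G] {d : ℕ} (hd : d ≠ 1)
    (hdvd : d ∣ Nat.card G) : ∃ a : G, ∀ x : G, x ^ d ≠ a := by
  obtain ⟨r, hr, hrd⟩ := Nat.exists_prime_and_dvd hd
  have := Fact.mk hr
  obtain ⟨g, hg⟩ := exists_prime_orderOf_dvd_card' r (hrd.trans hdvd)
  have hgd : g ^ d = 1 ^ d := by rw [one_pow, ← orderOf_dvd_iff_pow_eq_one, hg]; exact hrd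
  have hnot_inj : ¬ Function.Injective (fun x : G => x ^ d) := fun hinj =>
    hr.one_lt.ne' (by rw [← hg, orderOf_eq_one_iff]; exact hinj hgd)
  rw [Finite.injective_iff_surjective] at hnot_inj
  simpa [Function.Surjective] using hnot_inj

section CharacterSums

variable {F : Type*} [Field F] [Fintype F]

theorem MulChar.norm_apply_eq_one (χ : MulChar F ℂ) {a : F} (ha : a ≠ 0) : ‖χ a‖ = 1 := by
  classical
  simpa using Complex.norm_eq_one_of_mem_rootsOfUnity (χ.apply_mem_rootsOfUnity (Units.mk0 a ha))

theorem MulChar.exists_pow_orderOf_eq_of_apply_eq_one_s19 {R : Type*} [CommRing R]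
    {χ : MulChar F R} {x : F} (hx : x ≠ 0) (h : χ x = 1) :
    ∃ y : F, y ≠ 0 ∧ y ^ orderOf χ = x := by
  obtain ⟨g, hg⟩ := IsCyclic.exists_generator (α := Fˣ)
  obtain ⟨k, hk⟩ := mem_powers_iff_mem_zpowers.mpr (hg (Units.mk0 x hx))
  have hxg : (g : F) ^ k = x := by simpa using congrArg Units.val hk
  have hχk : χ ^ k = 1 := by
    rw [MulChar.eq_iff hg, MulChar.pow_apply_coe, MulChar.one_apply_coe, ← map_pow, hxg, h]
  obtain ⟨m, rfl⟩ := orderOf_dvd_of_pow_eq_one hχk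
  exact ⟨(g : F) ^ m, by simp, by rw [← pow_mul, mul_comm, hxg]⟩

theorem MulChar.exists_pow_orderOf_eq_of_sum_pow_apply_ne_zero {R : Type*} [CommRing R]
    [IsDomain R] {χ : MulChar F R} {x : F} (h : ∑ j ∈ range (orderOf χ), (χ ^ j) x ≠ 0) :
    ∃ y : F, y ≠ 0 ∧ y ^ orderOf χ = x := by
  have hx : x ≠ 0 := by
    rintro rfl
    simp at h
  refine χ.exists_pow_orderOf_eq_of_apply_eq_one_s19 hx ?_
  lift x to Fˣ using hx.isUnit
  simp_rw [MulChar.pow_apply_coe] at h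
  have hroot : (∑ j ∈ range (orderOf χ), χ x ^ j) * (χ x - 1) = 0 := by
    rw [geom_sum_mul, ← MulChar.pow_apply_coe, pow_orderOf_eq_one, MulChar.one_apply_coe, sub_self]
  exact sub_eq_zero.1 ((mul_eq_zero.1 hroot).resolve_left h)

theorem MulChar.sum_mul_apply_sub_eq {R : Type*} [CommRing R] (φ ψ : MulChar F R) {a : F}
    (ha : a ≠ 0) : ∑ x : F, φ x * ψ (a - x) = φ a * ψ a * jacobiSum φ ψ := by
  rw [jacobiSum, mul_sum]
  refine Fintype.sum_bijective (a⁻¹ * ·) (mulLeft_bijective₀ a⁻¹ (inv_ne_zero ha)) _ _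
    fun x => ?_
  rw [mul_mul_mul_comm, ← map_mul, ← map_mul]
  congr 2 <;> field_simp

theorem norm_jacobiSum_eq_sqrt {φ ψ : MulChar F ℂ} (hφ : φ ≠ 1) (hψ : ψ ≠ 1) (hφψ : φ * ψ ≠ 1) :
    ‖jacobiSum φ ψ‖ = √(Fintype.card F) := by
  have hchar : ringChar ℂ ≠ ringChar F := by
    rw [ringChar.eq_zero]
    exact (CharP.char_ne_zero_of_finite F (ringChar F)).symm
  have hconj : jacobiSum φ⁻¹ ψ⁻¹ = starRingEnd ℂ (jacobiSum φ ψ) := by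
    simp only [jacobiSum, map_sum, map_mul, starRingEnd_apply, MulChar.star_apply']
  have hnormSq := jacobiSum_mul_jacobiSum_inv hchar hφ hψ hφψ
  rw [hconj, Complex.mul_conj] at hnormSq
  rw [Complex.norm_def, (by exact_mod_cast hnormSq : Complex.normSq (jacobiSum φ ψ) = _)]

theorem norm_jacobiSum_one_pow {χ : MulChar F ℂ} {k : ℕ} (hk₀ : k ≠ 0) (hk : k < orderOf χ) :
    ‖jacobiSum 1 (χ ^ k)‖ = 1 := by
  rw [jacobiSum_one_nontrivial (pow_ne_one_of_lt_orderOf hk₀ hk), norm_neg, norm_one]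

theorem norm_jacobiSum_pow_pow_le {χ : MulChar F ℂ} {j k : ℕ} (hj₀ : j ≠ 0)
    (hj : j < orderOf χ) (hk₀ : k ≠ 0) (hk : k < orderOf χ) :
    ‖jacobiSum (χ ^ j) (χ ^ k)‖ ≤ if j + k = orderOf χ then 1 else √(Fintype.card F) := by
  have hχj : χ ^ j ≠ 1 := pow_ne_one_of_lt_orderOf hj₀ hj
  split_ifs with hjk
  · have hinv : χ ^ k = (χ ^ j)⁻¹ :=
      eq_inv_of_mul_eq_one_right (by rw [← pow_add, hjk, pow_orderOf_eq_one])
    rw [hinv, jacobiSum_nontrivial_inv hχj, norm_neg,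
      MulChar.norm_apply_eq_one _ (neg_ne_zero.2 one_ne_zero)]
  · refine (norm_jacobiSum_eq_sqrt hχj (pow_ne_one_of_lt_orderOf hk₀ hk) ?_).le
    rw [← pow_add]
    exact fun h => hjk (Nat.eq_of_dvd_of_lt_two_mul (by omega) (orderOf_dvd_of_pow_eq_one h)
      (by omega))

-- in row `j + 1` only the column `k + 1 = n - j` pairs `χ ^ (j + 1)` with its inverse
theorem sum_norm_jacobiSum_pow_succ_le {χ : MulChar F ℂ} {n j : ℕ} (hn : orderOf χ = n + 1)
    (hj : j < n) :
    ∑ k ∈ range n, ‖jacobiSum (χ ^ (j + 1)) (χ ^ (k + 1))‖ ≤ 1 + (n - 1) * √(Fintype.card F) := by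
  have hmem : n - 1 - j ∈ range n := mem_range.2 (by omega)
  rw [← add_sum_erase _ _ hmem]
  gcongr
  · exact (norm_jacobiSum_pow_pow_le (by omega) (by omega) (by omega) (by omega)).trans_eq
      (if_pos (by omega))
  · refine (sum_le_card_nsmul _ _ √(Fintype.card F) fun k hk => ?_).trans_eq ?_
    · have hk' := mem_erase.1 hk
      rw [mem_range] at hk'
      exact (norm_jacobiSum_pow_pow_le (by omega) (by omega) (by omega) (by omega)).trans_eq
        (if_neg (by omega))
    · rw [card_erase_of_mem hmem, card_range, nsmul_eq_mul, Nat.cast_sub (by omega)]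
      simp

theorem norm_sum_jacobiSum_sub_card_le (χ : MulChar F ℂ) {a : F} (ha : a ≠ 0) :
    ‖∑ j ∈ range (orderOf χ), ∑ k ∈ range (orderOf χ),
        (χ ^ j) a * (χ ^ k) a * jacobiSum (χ ^ j) (χ ^ k) - (Fintype.card F - 2)‖ ≤
      3 * ((orderOf χ : ℝ) - 1) +
        ((orderOf χ : ℝ) - 1) * ((orderOf χ : ℝ) - 2) * √(Fintype.card F) := by
  obtain ⟨n, hn⟩ : ∃ n, orderOf χ = n + 1 := Nat.exists_eq_add_one.2 χ.orderOf_pos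
  set t : ℕ → ℕ → ℂ := fun j k => (χ ^ j) a * (χ ^ k) a * jacobiSum (χ ^ j) (χ ^ k)
  have ht : ∀ j k, ‖t j k‖ = ‖jacobiSum (χ ^ j) (χ ^ k)‖ := fun j k => by
    simp only [t, norm_mul, MulChar.norm_apply_eq_one _ ha, one_mul]
  have ht₀₀ : t 0 0 = Fintype.card F - 2 := by
    simp [t, MulChar.one_apply ha.isUnit, jacobiSum_one_one]
  have ht₀ : ∀ k < n, ‖t 0 (k + 1)‖ = 1 := fun k hk => by
    rw [ht, pow_zero, norm_jacobiSum_one_pow k.succ_ne_zero (by omega)]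
  have ht₀' : ∀ j < n, ‖t (j + 1) 0‖ = 1 := fun j hj => by
    rw [ht, pow_zero, jacobiSum_comm, norm_jacobiSum_one_pow j.succ_ne_zero (by omega)]
  calc _ = ‖∑ j ∈ range n, (∑ k ∈ range n, t (j + 1) (k + 1) + t (j + 1) 0) +
          ∑ k ∈ range n, t 0 (k + 1)‖ := by
        change ‖∑ j ∈ range _, ∑ k ∈ range _, t j k - _‖ = _
        rw [hn, ← ht₀₀]
        simp_rw [sum_range_succ']
        congr 1
        ring
    _ ≤ ∑ j ∈ range n, (∑ k ∈ range n, ‖t (j + 1) (k + 1)‖ + ‖t (j + 1) 0‖) +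
          ∑ k ∈ range n, ‖t 0 (k + 1)‖ := by
        refine (norm_add_le _ _).trans (add_le_add ((norm_sum_le _ _).trans
          (sum_le_sum fun j _ => ?_)) (norm_sum_le _ _))
        exact (norm_add_le _ _).trans (add_le_add (norm_sum_le _ _) le_rfl)
    _ ≤ ∑ j ∈ range n, ((1 + (n - 1) * √(Fintype.card F)) + 1) + ∑ k ∈ range n, 1 := by
        gcongr with j hj k hk
        · simpa only [ht] using sum_norm_jacobiSum_pow_succ_le hn (mem_range.1 hj)
        · exact (ht₀' j (mem_range.1 hj)).le
        · exact (ht₀ k (mem_range.1 hk)).le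
    _ = _ := by
        simp only [sum_const, card_range, nsmul_eq_mul, hn]
        push_cast
        ring

theorem exists_pow_add_pow_eq {d : ℕ} (hd : d ∣ Fintype.card F - 1)
    (hF : 3 * ((d : ℝ) - 1) + (d - 1) * (d - 2) * √(Fintype.card F) < Fintype.card F - 2)
    {a : F} (ha : a ≠ 0) : ∃ x y : F, x ≠ 0 ∧ y ≠ 0 ∧ x ^ d + y ^ d = a := by
  have hd₀ : d ≠ 0 := by
    rintro rfl
    have := Fintype.one_lt_card (α := F)
    omega
  obtain ⟨χ, rfl⟩ := MulChar.exists_mulChar_orderOf F hd (Complex.isPrimitiveRoot_exp _ hd₀)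
  have hsum : ∑ x : F, (∑ j ∈ range (orderOf χ), (χ ^ j) x) *
        ∑ k ∈ range (orderOf χ), (χ ^ k) (a - x) =
      ∑ j ∈ range (orderOf χ), ∑ k ∈ range (orderOf χ),
        (χ ^ j) a * (χ ^ k) a * jacobiSum (χ ^ j) (χ ^ k) := by
    simp_rw [sum_mul_sum]
    rw [sum_comm]
    refine sum_congr rfl fun j _ => ?_
    rw [sum_comm]
    exact sum_congr rfl fun k _ => MulChar.sum_mul_apply_sub_eq _ _ ha
  have hne : ∑ x : F, (∑ j ∈ range (orderOf χ), (χ ^ j) x) *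
      ∑ k ∈ range (orderOf χ), (χ ^ k) (a - x) ≠ 0 := by
    intro h0
    have hle := norm_sum_jacobiSum_sub_card_le χ ha
    rw [← hsum, h0, zero_sub, norm_neg] at hle
    have hre : ((Fintype.card F : ℂ) - 2).re ≤ ‖(Fintype.card F : ℂ) - 2‖ := Complex.re_le_norm _
    simp only [Complex.sub_re, Complex.natCast_re, Complex.re_ofNat] at hre
    linarith
  obtain ⟨x, -, hx⟩ := exists_ne_zero_of_sum_ne_zero hne
  obtain ⟨y, hy, rfl⟩ :=
    MulChar.exists_pow_orderOf_eq_of_sum_pow_apply_ne_zero (left_ne_zero_of_mul hx)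
  obtain ⟨z, hz, hz'⟩ :=
    MulChar.exists_pow_orderOf_eq_of_sum_pow_apply_ne_zero (right_ne_zero_of_mul hx)
  exact ⟨y, z, hy, hz, by rw [hz']; ring⟩

end CharacterSums

theorem gWaring_four_eq_two_of_le {p : ℕ} [Fact p.Prime] (h4 : p % 4 = 1) (hp : 61 ≤ p) :
    gWaring p 4 = 2 := by
  have hdvd : 4 ∣ p - 1 := by omega
  refine gWaring_eq_of_mem_powSums Fact.out (fun a ha => ⟨2, by simp, ?_⟩) ?_
  · have hF : 3 * ((4 : ℕ) - 1 : ℝ) + ((4 : ℕ) - 1) * ((4 : ℕ) - 2) * √(Fintype.card (ZMod p)) <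
        Fintype.card (ZMod p) - 2 := by
      have hp' : (61 : ℝ) ≤ p := by exact_mod_cast hp
      have hsqrt : (39 / 5 : ℝ) ≤ √p := Real.le_sqrt_of_sq_le (by linarith)
      rw [ZMod.card]
      push_cast
      nlinarith [Real.sq_sqrt (Nat.cast_nonneg (α := ℝ) p)]
    obtain ⟨x, y, hx, hy, rfl⟩ := exists_pow_add_pow_eq (by rwa [ZMod.card]) hF ha
    exact mem_powSums.2 ⟨![Units.mk0 x hx, Units.mk0 y hy], by simp⟩
  · obtain ⟨a, ha⟩ := exists_forall_pow_ne_of_dvd_card (G := (ZMod p)ˣ) (d := 4) (by norm_num)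
      (by rwa [Nat.card_eq_fintype_card, ZMod.card_units])
    refine ⟨a, a.ne_zero, fun k hk => ?_⟩
    obtain rfl : k = 1 := by simpa using hk
    rintro hmem
    obtain ⟨u, hu⟩ := mem_powSums.1 hmem
    exact ha (u 0) (Units.ext (by simpa using hu.symm))

/-- Theorem 5: for a prime `p ≡ 1 mod 4`, `g_4(p) = 4` if `p = 5`,
`g_4(p) = 3` if `p ∈ {13, 17, 29}`, and `g_4(p) = 2` otherwise. -/
theorem gWaring_four (p : ℕ) (hp : p.Prime) (h4 : p % 4 = 1) :
    gWaring p 4 = if p = 5 then 4 else if p = 13 ∨ p = 17 ∨ p = 29 then 3 else 2 := by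
  split_ifs with h5 hexc
  · subst h5
    exact gWaring_eq_of_mem_powSums hp (by decide) (by decide)
  · set_option maxRecDepth 100000 in
    rcases hexc with rfl | rfl | rfl <;> exact gWaring_eq_of_mem_powSums hp (by decide) (by decide)
  · by_cases h61 : 61 ≤ p
    · exact @gWaring_four_eq_two_of_le p ⟨hp⟩ h4 h61
    · obtain rfl | rfl | rfl : p = 37 ∨ p = 41 ∨ p = 53 := by
        interval_cases p <;> first | omega | norm_num at hp
      all_goals set_option maxRecDepth 100000 in
        exact gWaring_eq_of_mem_powSums hp (by decide) (by decide)
end
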